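/- arXiv:1406.7855 — 2 statements merged into one kernel-verified Lean document; each statement's English description precedes it below -/
import Mathlib

section
/- Let p ≥ 2 and let f: {-1,1}^n → {-1,0,1} satisfy f̂(S) = 0 for all S with |S| < k. Then for all t > 0, E|P_t f|^p ≤ e^{-2tk}·E|f|^p. -/
/-- Expectation with respect to the uniform measure on `{-1,1}^n` (modeled by `Fin n → Bool`). -/
noncomputable def cubeE (n : ℕ) (f : (Fin n → Bool) → ℝ) : ℝ := (∑ x, f x) / 2 ^ n

/-- The Walsh character `W_S(x) = ∏_{i ∈ S} x_i`. -/
noncomputable def walsh (n : ℕ) (S : Finset (Fin n)) (x : Fin n → Bool) : ℝ :=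
  ∏ i ∈ S, (if x i then (1 : ℝ) else -1)

/-- Fourier coefficient `f̂(S) = E[f · W_S]`. -/
noncomputable def cubeCoeff (n : ℕ) (f : (Fin n → Bool) → ℝ) (S : Finset (Fin n)) : ℝ :=
  cubeE n fun x => f x * walsh n S x

/-- The heat semigroup `P_t f = ∑_S e^{-t|S|} f̂(S) W_S`. -/
noncomputable def heat (n : ℕ) (t : ℝ) (f : (Fin n → Bool) → ℝ) : (Fin n → Bool) → ℝ :=
  fun x => ∑ S : Finset (Fin n), Real.exp (-t * S.card) * cubeCoeff n f S * walsh n S x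

/-!
`P_t` is an average against the kernel `K_t(x, y) = ∏ i, (1 + e^{-t} x_i y_i)`, which is
nonnegative with mean one, so `|P_t f| ≤ 1` when `|f| ≤ 1`; for `p ≥ 2` this gives
`|P_t f|^p ≤ (P_t f)^2`. By Parseval `E (P_t f)^2 = ∑ e^{-2t|S|} f̂(S)^2 ≤ e^{-2tk} E f^2`,
and `E f^2 = E |f|^p` because `f` takes values in `{-1, 0, 1}`.
-/

open Finset Real

def boolSign (b : Bool) : ℝ := if b then 1 else -1

lemma boolSign_mul_self (b : Bool) : boolSign b * boolSign b = 1 := by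
  cases b <;> norm_num [boolSign]

lemma walsh_eq_prod_boolSign (n : ℕ) (S : Finset (Fin n)) (x : Fin n → Bool) :
    walsh n S x = ∏ i ∈ S, boolSign (x i) := rfl

lemma cubeE_mono {n : ℕ} {f g : (Fin n → Bool) → ℝ} (h : ∀ x, f x ≤ g x) :
    cubeE n f ≤ cubeE n g := by
  unfold cubeE
  gcongr with x
  exact h x

lemma abs_cubeE_le {n : ℕ} (f : (Fin n → Bool) → ℝ) :
    |cubeE n f| ≤ cubeE n fun x => |f x| := by
  rw [cubeE, cubeE, abs_div, abs_of_pos (by positivity : (0 : ℝ) < 2 ^ n)]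
  gcongr
  exact abs_sum_le_sum_abs _ _

section Walsh

variable {n : ℕ}

lemma walsh_mul_walsh (S T : Finset (Fin n)) (x : Fin n → Bool) :
    walsh n S x * walsh n T x = walsh n (symmDiff S T) x := by
  have hunion : S ∪ T = symmDiff S T ∪ (S ∩ T) := by
    ext i; simp only [mem_union, mem_symmDiff, mem_inter]; tauto
  have hdisj : Disjoint (symmDiff S T) (S ∩ T) := by
    rw [disjoint_left]; intro i; simp only [mem_symmDiff, mem_inter]; tauto
  simp only [walsh_eq_prod_boolSign]
  rw [← prod_union_inter, hunion, prod_union hdisj, mul_assoc, ← prod_mul_distrib,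
    prod_eq_one fun i _ => boolSign_mul_self (x i), mul_one]

lemma sum_walsh (S : Finset (Fin n)) :
    ∑ x, walsh n S x = if S = ∅ then 2 ^ n else 0 := by
  have hfactor :
      ∀ i, ∑ b : Bool, (if i ∈ S then boolSign b else 1) = if i ∈ S then 0 else 2 := by
    intro i; by_cases hi : i ∈ S <;> simp [hi, boolSign]
  calc ∑ x, walsh n S x
      = ∑ x : Fin n → Bool, ∏ i, (if i ∈ S then boolSign (x i) else 1) := by
        simp only [walsh_eq_prod_boolSign, prod_ite_mem, univ_inter]
    _ = ∏ i, ∑ b : Bool, (if i ∈ S then boolSign b else 1) :=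
        (Fintype.prod_sum fun i (b : Bool) => if i ∈ S then boolSign b else 1).symm
    _ = ∏ i, (if i ∈ S then (0 : ℝ) else 2) := prod_congr rfl fun i _ => hfactor i
    _ = if S = ∅ then 2 ^ n else 0 := by
        split_ifs with hS
        · simp [hS]
        · obtain ⟨i, hi⟩ := nonempty_iff_ne_empty.2 hS
          exact prod_eq_zero (mem_univ i) (if_pos hi)

lemma sum_walsh_mul_walsh (S T : Finset (Fin n)) :
    ∑ x, walsh n S x * walsh n T x = if S = T then 2 ^ n else 0 := by
  simp only [walsh_mul_walsh, sum_walsh, ← bot_eq_empty, symmDiff_eq_bot]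

lemma cubeE_sum_mul_walsh_sq (a : Finset (Fin n) → ℝ) :
    cubeE n (fun x => (∑ S, a S * walsh n S x) ^ 2) = ∑ S, a S ^ 2 := by
  have hsum :
      ∑ x : Fin n → Bool, (∑ S, a S * walsh n S x) ^ 2 = (∑ S, a S ^ 2) * 2 ^ n := by
    calc ∑ x : Fin n → Bool, (∑ S, a S * walsh n S x) ^ 2
        = ∑ S, ∑ T, a S * a T * ∑ x, walsh n S x * walsh n T x := by
          have hexpand : ∀ x : Fin n → Bool, (∑ S, a S * walsh n S x) ^ 2
              = ∑ S, ∑ T, a S * a T * (walsh n S x * walsh n T x) := fun x => by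
            rw [sq, sum_mul_sum]
            exact sum_congr rfl fun S _ => sum_congr rfl fun T _ => by ring
          simp only [hexpand, mul_sum]
          rw [sum_comm]
          exact sum_congr rfl fun S _ => sum_comm
      _ = (∑ S, a S ^ 2) * 2 ^ n := by
          simp [sum_walsh_mul_walsh, sum_mul, sq]
  rw [cubeE, hsum, mul_div_cancel_right₀ _ (by positivity)]

end Walsh

noncomputable def heatKernel (n : ℕ) (t : ℝ) (x y : Fin n → Bool) : ℝ :=
  ∏ i, (1 + exp (-t) * (boolSign (x i) * boolSign (y i)))

section HeatKernel

variable {n : ℕ}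

lemma sum_exp_mul_walsh_mul_walsh (t : ℝ) (x y : Fin n → Bool) :
    ∑ S, exp (-t * #S) * (walsh n S x * walsh n S y) = heatKernel n t x y := by
  rw [heatKernel, prod_one_add, powerset_univ]
  refine sum_congr rfl fun S _ => ?_
  rw [mul_comm (-t), exp_nat_mul, ← prod_const, walsh_eq_prod_boolSign, walsh_eq_prod_boolSign,
    ← prod_mul_distrib, ← prod_mul_distrib]

lemma heat_eq_cubeE_heatKernel (t : ℝ) (f : (Fin n → Bool) → ℝ) (x : Fin n → Bool) :
    heat n t f x = cubeE n fun y => heatKernel n t x y * f y := by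
  simp only [heat, cubeCoeff, cubeE, ← sum_exp_mul_walsh_mul_walsh, sum_mul, mul_sum, sum_div]
  rw [sum_comm]
  exact sum_congr rfl fun y _ => sum_congr rfl fun S _ => by ring

lemma heatKernel_nonneg {t : ℝ} (ht : 0 ≤ t) (x y : Fin n → Bool) :
    0 ≤ heatKernel n t x y := by
  have hexp : exp (-t) ≤ 1 := exp_le_one_iff.2 (neg_nonpos.2 ht)
  refine prod_nonneg fun i _ => ?_
  cases x i <;> cases y i <;> simp [boolSign] <;> linarith [exp_pos (-t)]

lemma cubeE_heatKernel (t : ℝ) (x : Fin n → Bool) : cubeE n (heatKernel n t x) = 1 := by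
  have hfactor : ∀ i, ∑ b : Bool, (1 + exp (-t) * (boolSign (x i) * boolSign b)) = 2 := by
    intro i; cases x i <;> simp [boolSign] <;> ring
  rw [cubeE, div_eq_one_iff_eq (by positivity)]
  calc ∑ y, heatKernel n t x y
      = ∏ i, ∑ b : Bool, (1 + exp (-t) * (boolSign (x i) * boolSign b)) :=
        (Fintype.prod_sum fun i (b : Bool) => 1 + exp (-t) * (boolSign (x i) * boolSign b)).symm
    _ = 2 ^ n := by simp only [hfactor, prod_const, card_univ, Fintype.card_fin]

lemma heatKernel_zero (x y : Fin n → Bool) :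
    heatKernel n 0 x y = if x = y then 2 ^ n else 0 := by
  have hfactor :
      ∀ a b : Bool, 1 + exp (-0) * (boolSign a * boolSign b) = if a = b then 2 else 0 := by
    intro a b; cases a <;> cases b <;> simp [boolSign] <;> norm_num
  simp only [heatKernel, hfactor]
  split_ifs with hxy
  · simp [hxy]
  · obtain ⟨i, hi⟩ := Function.ne_iff.1 hxy
    exact prod_eq_zero (mem_univ i) (if_neg hi)

lemma heat_zero (f : (Fin n → Bool) → ℝ) : heat n 0 f = f := by
  ext x
  simp [heat_eq_cubeE_heatKernel, heatKernel_zero, cubeE]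

lemma abs_heat_le {t M : ℝ} (ht : 0 ≤ t) {f : (Fin n → Bool) → ℝ}
    (hf : ∀ x, |f x| ≤ M) (x : Fin n → Bool) : |heat n t f x| ≤ M := by
  rw [heat_eq_cubeE_heatKernel]
  calc |cubeE n fun y => heatKernel n t x y * f y|
      ≤ cubeE n fun y => |heatKernel n t x y * f y| := abs_cubeE_le _
    _ ≤ cubeE n fun y => heatKernel n t x y * M := cubeE_mono fun y => by
        rw [abs_mul, abs_of_nonneg (heatKernel_nonneg ht x y)]
        exact mul_le_mul_of_nonneg_left (hf y) (heatKernel_nonneg ht x y)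
    _ = M := by rw [cubeE, ← sum_mul, mul_div_right_comm, ← cubeE, cubeE_heatKernel, one_mul]

end HeatKernel

section Decay

variable {n : ℕ}

lemma cubeE_heat_sq (t : ℝ) (f : (Fin n → Bool) → ℝ) :
    cubeE n (fun x => heat n t f x ^ 2) = ∑ S, (exp (-t * #S) * cubeCoeff n f S) ^ 2 :=
  cubeE_sum_mul_walsh_sq _

lemma cubeE_sq_eq_sum_cubeCoeff_sq (f : (Fin n → Bool) → ℝ) :
    cubeE n (fun x => f x ^ 2) = ∑ S, cubeCoeff n f S ^ 2 := by
  simpa [heat_zero] using cubeE_heat_sq 0 f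

lemma cubeE_heat_sq_le {k : ℕ} {t : ℝ} (ht : 0 ≤ t) {f : (Fin n → Bool) → ℝ}
    (hcoeff : ∀ S : Finset (Fin n), #S < k → cubeCoeff n f S = 0) :
    cubeE n (fun x => heat n t f x ^ 2) ≤ exp (-2 * t * k) * cubeE n (fun x => f x ^ 2) := by
  rw [cubeE_heat_sq, cubeE_sq_eq_sum_cubeCoeff_sq, mul_sum]
  refine sum_le_sum fun S _ => ?_
  rcases lt_or_ge #S k with hS | hS
  · simp [hcoeff S hS]
  · have hk : (k : ℝ) ≤ #S := by exact_mod_cast hS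
    have hdecay : exp (-t * #S) ^ 2 ≤ exp (-2 * t * k) := by
      rw [← exp_nat_mul, exp_le_exp]
      push_cast
      nlinarith
    rw [mul_pow]
    exact mul_le_mul_of_nonneg_right hdecay (sq_nonneg _)

end Decay

lemma abs_rpow_le_sq {a p : ℝ} (ha : |a| ≤ 1) (hp : 2 ≤ p) : |a| ^ p ≤ a ^ 2 := by
  calc |a| ^ p ≤ |a| ^ (2 : ℝ) := rpow_le_rpow_of_exponent_ge' (abs_nonneg a) ha zero_le_two hp
    _ = a ^ 2 := by rw [rpow_two, sq_abs]

lemma abs_rpow_eq_sq_of_sign {a p : ℝ} (ha : a = -1 ∨ a = 0 ∨ a = 1) (hp : p ≠ 0) :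
    |a| ^ p = a ^ 2 := by
  rcases ha with rfl | rfl | rfl <;> simp [zero_rpow hp]

theorem stmt_12 (n k : ℕ) (p : ℝ) (hp : 2 ≤ p)
    (f : (Fin n → Bool) → ℝ) (hval : ∀ x, f x = -1 ∨ f x = 0 ∨ f x = 1)
    (hcoeff : ∀ S : Finset (Fin n), S.card < k → cubeCoeff n f S = 0)
    (t : ℝ) (ht : 0 < t) :
    cubeE n (fun x => |heat n t f x| ^ p) ≤
      Real.exp (-2 * t * k) * cubeE n (fun x => |f x| ^ p) := by
  have hf_abs : ∀ x, |f x| ≤ 1 := fun x => by rcases hval x with h | h | h <;> simp [h]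
  have hf_pow : (fun x => |f x| ^ p) = fun x => f x ^ 2 :=
    funext fun x => abs_rpow_eq_sq_of_sign (hval x) (by linarith)
  calc cubeE n (fun x => |heat n t f x| ^ p)
      ≤ cubeE n (fun x => heat n t f x ^ 2) :=
        cubeE_mono fun x => abs_rpow_le_sq (abs_heat_le ht.le hf_abs x) hp
    _ ≤ exp (-2 * t * k) * cubeE n (fun x => f x ^ 2) := cubeE_heat_sq_le ht.le hcoeff
    _ = exp (-2 * t * k) * cubeE n (fun x => |f x| ^ p) := by rw [hf_pow]
end

section
/- For all real numbers a, b and all p ∈ (1,∞): (p-2)²·(|a|^p + |b|^p) + 8(p-1)·φ_{p/2}(a)·φ_{p/2}(b) ≥ p²·(a·φ_{p-1}(b) + φ_{p-1}(a)·b), where φ_s(x) = sign(x)|x|^s. -/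
/-- `φ_s(x) = sign(x) · |x|^s`. -/
noncomputable def phi (s x : ℝ) : ℝ := Real.sign x * |x| ^ s

/-!
For `a, b ≠ 0` put `x = |a|`, `y = |b|`, `E = (xy)^{p/2}` and `s = log (x / y) / 2`. Then
`x y^{p-1} + x^{p-1} y = 2E cosh((p-2)s)` and `x^p + y^p = 2E cosh(ps)`, so for `a, b` of opposite
signs the inequality reduces to `cosh ≥ 1`, and for equal signs (using `p² - (p-2)² = 4(p-1)`) to
`p² (cosh((p-2)s) - 1) ≤ (p-2)² (cosh(ps) - 1)`. Since `cosh u - 1 = 2 sinh²(u/2)`, this says that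
`sinh(ct)/c` is nondecreasing in `c > 0` (applied to `|p-2| ≤ p`), which holds because `sinh` is
convex on `[0, ∞)` and vanishes at `0`.
-/

open Real Set

namespace Real

lemma sign_mul_abs (r : ℝ) : sign r * |r| = r := by
  rcases lt_trichotomy r 0 with h | rfl | h
  · simp [sign_of_neg h, abs_of_neg h]
  · simp
  · simp [sign_of_pos h, abs_of_pos h]

lemma cosh_sub_one_eq (x : ℝ) : cosh x - 1 = 2 * sinh (x / 2) ^ 2 := by
  conv_lhs => rw [← mul_div_cancel₀ x two_ne_zero, cosh_two_mul, cosh_sq]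
  ring

lemma exp_sub_add_exp_add (m u : ℝ) : exp (m - u) + exp (m + u) = 2 * exp m * cosh u := by
  rw [cosh_eq, sub_eq_add_neg, exp_add, exp_add]
  ring

lemma convexOn_sinh : ConvexOn ℝ (Ici 0) sinh := by
  refine MonotoneOn.convexOn_of_deriv (convex_Ici 0) continuous_sinh.continuousOn
    differentiable_sinh.differentiableOn ?_
  rw [deriv_sinh, interior_Ici]
  exact cosh_strictMonoOn.monotoneOn.mono Ioi_subset_Ici_self

lemma sinh_mul_le_mul_sinh {r x : ℝ} (hr₀ : 0 ≤ r) (hr₁ : r ≤ 1) (hx : 0 ≤ x) :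
    sinh (r * x) ≤ r * sinh x := by
  simpa using convexOn_sinh.2 (mem_Ici.2 hx) self_mem_Ici hr₀ (sub_nonneg.2 hr₁) (by ring)

lemma mul_sinh_mul_le_mul_sinh_mul {c d t : ℝ} (hc : 0 ≤ c) (hcd : c ≤ d) (ht : 0 ≤ t) :
    d * sinh (c * t) ≤ c * sinh (d * t) := by
  rcases (hc.trans hcd).eq_or_lt with rfl | hd
  · simp [le_antisymm hcd hc]
  have h := sinh_mul_le_mul_sinh (div_nonneg hc hd.le) ((div_le_one hd).2 hcd) (mul_nonneg hd.le ht)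
  rw [show c / d * (d * t) = c * t by field_simp] at h
  calc d * sinh (c * t) ≤ d * (c / d * sinh (d * t)) := mul_le_mul_of_nonneg_left h hd.le
    _ = c * sinh (d * t) := by field_simp

lemma sq_mul_cosh_sub_one_le {c d : ℝ} (hcd : |c| ≤ |d|) (s : ℝ) :
    d ^ 2 * (cosh (c * s) - 1) ≤ c ^ 2 * (cosh (d * s) - 1) := by
  have key := mul_sinh_mul_le_mul_sinh_mul (abs_nonneg c) hcd (by positivity : 0 ≤ |s| / 2)
  have hc : 0 ≤ sinh (|c| * (|s| / 2)) := sinh_nonneg_iff.2 (by positivity)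
  rw [← cosh_abs, abs_mul, cosh_sub_one_eq, ← cosh_abs (d * s), abs_mul, cosh_sub_one_eq,
    ← sq_abs c, ← sq_abs d, mul_div_assoc, mul_div_assoc]
  nlinarith [mul_le_mul key key (by positivity) (key.trans' (by positivity))]

end Real

lemma rpow_add_rpow_eq_mul_cosh {x y : ℝ} (hx : 0 < x) (hy : 0 < y) (q : ℝ) :
    x ^ q + y ^ q = 2 * (x ^ (q / 2) * y ^ (q / 2)) * cosh (q * ((log x - log y) / 2)) := by
  simp only [rpow_def_of_pos hx, rpow_def_of_pos hy, ← exp_add, ← exp_sub_add_exp_add]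
  rw [add_comm]
  congr 2 <;> ring

lemma mul_rpow_sub_one_add_eq_mul_cosh {x y : ℝ} (hx : 0 < x) (hy : 0 < y) (p : ℝ) :
    x * y ^ (p - 1) + x ^ (p - 1) * y =
      2 * (x ^ (p / 2) * y ^ (p / 2)) * cosh ((p - 2) * ((log x - log y) / 2)) := by
  conv_lhs => rw [← exp_log hx, ← exp_log hy, ← exp_mul, ← exp_mul, ← exp_add, ← exp_add]
  simp only [rpow_def_of_pos hx, rpow_def_of_pos hy, ← exp_add, ← exp_sub_add_exp_add]
  congr 2 <;> ring

lemma sq_mul_sign_cross_le {p x y σ : ℝ} (hp : 1 ≤ p) (hx : 0 < x) (hy : 0 < y)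
    (hσ : σ = 1 ∨ σ = -1) :
    p ^ 2 * (σ * (x * y ^ (p - 1) + x ^ (p - 1) * y)) ≤
      (p - 2) ^ 2 * (x ^ p + y ^ p) + 8 * (p - 1) * (σ * (x ^ (p / 2) * y ^ (p / 2))) := by
  rw [mul_rpow_sub_one_add_eq_mul_cosh hx hy, rpow_add_rpow_eq_mul_cosh hx hy]
  set s := (log x - log y) / 2
  have hE : 0 < x ^ (p / 2) * y ^ (p / 2) := by positivity
  rcases hσ with rfl | rfl
  · have h := sq_mul_cosh_sub_one_le (c := p - 2) (d := p)
      (by rw [abs_of_pos (by linarith : 0 < p)]; exact abs_le.2 ⟨by linarith, by linarith⟩) s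
    nlinarith
  · have hA := sub_nonneg.2 (one_le_cosh ((p - 2) * s))
    have hB := sub_nonneg.2 (one_le_cosh (p * s))
    nlinarith [mul_nonneg (mul_nonneg hE.le (sq_nonneg p)) hA,
      mul_nonneg (mul_nonneg hE.le (sq_nonneg (p - 2))) hB, mul_nonneg hE.le (sq_nonneg (p - 2))]

theorem stmt_15 (p : ℝ) (hp : 1 < p) (a b : ℝ) :
    p ^ 2 * (a * phi (p - 1) b + phi (p - 1) a * b) ≤
      (p - 2) ^ 2 * (|a| ^ p + |b| ^ p) + 8 * (p - 1) * (phi (p / 2) a * phi (p / 2) b) := by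
  have hp₀ : p ≠ 0 := by positivity
  rcases eq_or_ne a 0 with rfl | ha
  · simp [phi, zero_rpow hp₀]
    positivity
  rcases eq_or_ne b 0 with rfl | hb
  · simp [phi, zero_rpow hp₀]
    positivity
  have hσ : sign a * sign b = 1 ∨ sign a * sign b = -1 := by
    rcases sign_apply_eq_of_ne_zero a ha with h | h <;>
      rcases sign_apply_eq_of_ne_zero b hb with h' | h' <;> simp [h, h']
  have cross : a * phi (p - 1) b + phi (p - 1) a * b =
      sign a * sign b * (|a| * |b| ^ (p - 1) + |a| ^ (p - 1) * |b|) := by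
    unfold phi
    linear_combination (sign b * |b| ^ (p - 1)) * (Real.sign_mul_abs a).symm
      + (sign a * |a| ^ (p - 1)) * (Real.sign_mul_abs b).symm
  have mid : phi (p / 2) a * phi (p / 2) b = sign a * sign b * (|a| ^ (p / 2) * |b| ^ (p / 2)) := by
    unfold phi
    ring
  rw [cross, mid]
  exact sq_mul_sign_cross_le hp.le (abs_pos.2 ha) (abs_pos.2 hb) hσ
end
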